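/- Let p be a prime and d a positive natural number. Let τ_1, …, τ_n be vectors in ℚ_p^d such that (i) there exists a nonzero a ∈ ℚ_p with ⟨τ_j, τ_j⟩ = a for all 1 ≤ j ≤ n; (ii) there exist an invertible linear operator P on ℚ_p^d and λ_1, …, λ_d ∈ ℚ_p such that the frame operator S_τ satisfies S_τ = P ∘ D ∘ P⁻¹, where D is the diagonal operator with diagonal entries λ_1, …, λ_d, and |∑_{j=1}^d λ_j|² ≤ |d| · |∑_{j=1}^d λ_j²|. Then |n|² ≤ |d| · max{|n|, max_{1 ≤ j, k ≤ n, j ≠ k} |⟨τ_j, τ_k⟩|²/|a²|}, where |n| and |d| denote the p-adic absolute values of the integers n and d. -/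
import Mathlib


open scoped BigOperators

noncomputable section

variable {p : ℕ} [Fact p.Prime]

/-- The bilinear form `⟨x, y⟩ = ∑ i, x i * y i` on `ℚ_p^d`. -/
def pinner {d : ℕ} (x y : Fin d → ℚ_[p]) : ℚ_[p] := ∑ i, x i * y i

/-- `⟨·, y⟩` as a linear map. -/
def pinnerL {d : ℕ} (y : Fin d → ℚ_[p]) : (Fin d → ℚ_[p]) →ₗ[ℚ_[p]] ℚ_[p] where
  toFun x := pinner x y
  map_add' x z := by simp [pinner, add_mul, Finset.sum_add_distrib]
  map_smul' c x := by simp [pinner, Finset.mul_sum, mul_assoc]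

/-- The frame operator `S_τ x = ∑ j, ⟨x, τ j⟩ • τ j`. -/
def frameOp {d n : ℕ} (τ : Fin n → Fin d → ℚ_[p]) :
    (Fin d → ℚ_[p]) →ₗ[ℚ_[p]] (Fin d → ℚ_[p]) :=
  ∑ j, (pinnerL (τ j)).smulRight (τ j)

/-- `S_τ` is similar (through an invertible operator) to a diagonal operator with
eigenvalues `λ_1, …, λ_d` satisfying `|∑ λ_j|² ≤ |d| |∑ λ_j²|`. -/
def GoodDiagonalizable {d n : ℕ} (τ : Fin n → Fin d → ℚ_[p]) : Prop :=
  ∃ (P : (Fin d → ℚ_[p]) ≃ₗ[ℚ_[p]] (Fin d → ℚ_[p])) (lam : Fin d → ℚ_[p]),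
    frameOp τ = P.toLinearMap ∘ₗ Matrix.toLin' (Matrix.diagonal lam) ∘ₗ P.symm.toLinearMap ∧
    ‖∑ j, lam j‖ ^ 2 ≤ ‖(d : ℚ_[p])‖ * ‖∑ j, lam j ^ 2‖

/-- p-adic `γ`-equiangular lines. -/
def IsPadicEquiangular {d n : ℕ} (γ : ℝ) (τ : Fin n → Fin d → ℚ_[p]) : Prop :=
  (∀ j, pinner (τ j) (τ j) = 1) ∧
  (∀ j k, j ≠ k → ‖pinner (τ j) (τ k)‖ = γ) ∧
  GoodDiagonalizable τ

/-- p-adic `(γ, a)`-equiangular lines. -/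
def IsPadicEquiangularA {d n : ℕ} (γ : ℝ) (a : ℚ_[p]) (τ : Fin n → Fin d → ℚ_[p]) : Prop :=
  (∀ j, pinner (τ j) (τ j) = a) ∧
  (∀ j k, j ≠ k → ‖pinner (τ j) (τ k)‖ = γ) ∧
  GoodDiagonalizable τ

@[simp] lemma pinnerL_apply {d : ℕ} (y x : Fin d → ℚ_[p]) : pinnerL y x = pinner x y := rfl

lemma pinner_comm {d : ℕ} (x y : Fin d → ℚ_[p]) : pinner x y = pinner y x := by
  simp [pinner, mul_comm]

lemma pinner_smul_left {d : ℕ} (c : ℚ_[p]) (x y : Fin d → ℚ_[p]) :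
    pinner (c • x) y = c * pinner x y := by
  simp [pinner, Finset.mul_sum, mul_assoc]

lemma trace_rankOne {d : ℕ} (y v : Fin d → ℚ_[p]) :
    LinearMap.trace ℚ_[p] (Fin d → ℚ_[p]) ((pinnerL y).smulRight v) = pinner y v := by
  rw [LinearMap.trace_eq_matrix_trace ℚ_[p] (Pi.basisFun ℚ_[p] (Fin d)),
    LinearMap.toMatrix_eq_toMatrix']
  simp [Matrix.trace, Matrix.diag, LinearMap.toMatrix'_apply, pinner, Pi.single_apply, mul_comm]

lemma rankOne_comp {d : ℕ} (y v w u : Fin d → ℚ_[p]) :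
    ((pinnerL y).smulRight v) ∘ₗ ((pinnerL w).smulRight u) =
      pinner u y • ((pinnerL w).smulRight v) := by
  ext x
  simp [smul_smul, pinner_smul_left, mul_comm, mul_left_comm]

lemma trace_frameOp {d n : ℕ} (τ : Fin n → Fin d → ℚ_[p]) :
    LinearMap.trace ℚ_[p] (Fin d → ℚ_[p]) (frameOp τ) = ∑ j, pinner (τ j) (τ j) := by
  rw [frameOp, map_sum]
  exact Finset.sum_congr rfl fun j _ => trace_rankOne _ _

lemma trace_frameOp_sq {d n : ℕ} (τ : Fin n → Fin d → ℚ_[p]) :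
    LinearMap.trace ℚ_[p] (Fin d → ℚ_[p]) (frameOp τ ∘ₗ frameOp τ) =
      ∑ j, ∑ k, pinner (τ j) (τ k) * pinner (τ j) (τ k) := by
  rw [frameOp, ← Module.End.mul_eq_comp, Finset.sum_mul]
  simp_rw [Finset.mul_sum]
  rw [map_sum]
  refine Finset.sum_congr rfl fun j _ => ?_
  rw [map_sum]
  refine Finset.sum_congr rfl fun k _ => ?_
  rw [Module.End.mul_eq_comp, rankOne_comp, map_smul, trace_rankOne, smul_eq_mul,
    pinner_comm (τ k) (τ j)]

lemma trace_toLin'_diag {d : ℕ} (lam : Fin d → ℚ_[p]) :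
    LinearMap.trace ℚ_[p] (Fin d → ℚ_[p]) (Matrix.toLin' (Matrix.diagonal lam)) = ∑ j, lam j := by
  rw [LinearMap.trace_eq_matrix_trace ℚ_[p] (Pi.basisFun ℚ_[p] (Fin d)),
    LinearMap.toMatrix_eq_toMatrix', LinearMap.toMatrix'_toLin', Matrix.trace_diagonal]

/-- **General p-adic Welch bound** (version with common squared norm `a`). -/
theorem general_padic_welch_bound_a {d n : ℕ} (hd : 0 < d)
    (τ : Fin n → Fin d → ℚ_[p])
    (a : ℚ_[p]) (ha : a ≠ 0)
    (h1 : ∀ j, pinner (τ j) (τ j) = a)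
    (h2 : GoodDiagonalizable τ) :
    ‖(n : ℚ_[p])‖ ^ 2 ≤ ‖(d : ℚ_[p])‖ *
      max ‖(n : ℚ_[p])‖
        (sSup {x : ℝ | ∃ j k : Fin n, j ≠ k ∧ x = ‖pinner (τ j) (τ k)‖ ^ 2 / ‖a ^ 2‖}) := by
  classical
  obtain ⟨P, lam, hPD, hlam⟩ := h2
  set f : Fin n → Fin n → ℚ_[p] := fun j k => pinner (τ j) (τ k) * pinner (τ j) (τ k) with hf
  set B : ℚ_[p] := ∑ j, ∑ k, f j k with hB
  have hS : frameOp τ = P.conj (Matrix.toLin' (Matrix.diagonal lam)) := by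
    rw [LinearEquiv.conj_apply, LinearMap.comp_assoc]; exact hPD
  have h1' : ∑ j : Fin n, pinner (τ j) (τ j) = (n : ℚ_[p]) * a := by
    simp [h1, Finset.sum_const, nsmul_eq_mul]
  have t1 : ∑ j, lam j = (n : ℚ_[p]) * a := by
    rw [← h1', ← trace_frameOp τ, hS, LinearMap.trace_conj', trace_toLin'_diag]
  have t2 : ∑ j, lam j ^ 2 = B := by
    rw [hB, ← trace_frameOp_sq τ, hS, ← LinearEquiv.conj_comp, LinearMap.trace_conj',
      ← Matrix.toLin'_mul, Matrix.diagonal_mul_diagonal, trace_toLin'_diag]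
    exact Finset.sum_congr rfl fun j _ => (sq _)
  have key : ‖(n : ℚ_[p]) * a‖ ^ 2 ≤ ‖(d : ℚ_[p])‖ * ‖B‖ := by
    rw [← t1, ← t2]; exact hlam
  set S : Set ℝ := {x : ℝ | ∃ j k : Fin n, j ≠ k ∧ x = ‖pinner (τ j) (τ k)‖ ^ 2 / ‖a ^ 2‖}
    with hSdef
  set s : ℝ := sSup S with hs
  set M : ℝ := max ‖(n : ℚ_[p])‖ s with hM
  have hSfin : S.Finite := by
    apply Set.Finite.subset (Set.finite_range
      (fun jk : Fin n × Fin n => ‖pinner (τ jk.1) (τ jk.2)‖ ^ 2 / ‖a ^ 2‖))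
    rintro x ⟨j, k, _, rfl⟩
    exact ⟨(j, k), rfl⟩
  have hSbdd : BddAbove S := hSfin.bddAbove
  have hM0 : 0 ≤ M := le_trans (norm_nonneg _) (le_max_left _ _)
  have ha2 : (0:ℝ) < ‖a ^ 2‖ := by
    rw [norm_pos_iff]; exact pow_ne_zero 2 ha
  have hterm : ∀ j k : Fin n, j ≠ k → ‖f j k‖ ≤ M * ‖a ^ 2‖ := by
    intro j k hjk
    have hmem : ‖pinner (τ j) (τ k)‖ ^ 2 / ‖a ^ 2‖ ∈ S := ⟨j, k, hjk, rfl⟩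
    have hle : ‖pinner (τ j) (τ k)‖ ^ 2 / ‖a ^ 2‖ ≤ s := le_csSup hSbdd hmem
    have heq : ‖f j k‖ = (‖pinner (τ j) (τ k)‖ ^ 2 / ‖a ^ 2‖) * ‖a ^ 2‖ := by
      rw [div_mul_cancel₀ _ (ne_of_gt ha2), hf]
      simp [sq, norm_mul]
    rw [heq]
    calc (‖pinner (τ j) (τ k)‖ ^ 2 / ‖a ^ 2‖) * ‖a ^ 2‖ ≤ s * ‖a ^ 2‖ :=
          mul_le_mul_of_nonneg_right hle ha2.le
      _ ≤ M * ‖a ^ 2‖ := mul_le_mul_of_nonneg_right (le_max_right _ _) ha2.le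
  set E : ℚ_[p] := ∑ j, ∑ k ∈ Finset.univ.erase j, f j k with hE
  have hBsplit : B = (n : ℚ_[p]) * a ^ 2 + E := by
    have h' : ∀ j : Fin n, ∑ k, f j k = f j j + ∑ k ∈ Finset.univ.erase j, f j k :=
      fun j => (Finset.add_sum_erase _ _ (Finset.mem_univ j)).symm
    rw [hB, Finset.sum_congr rfl fun j _ => h' j, Finset.sum_add_distrib, hE]
    congr 1
    simp [hf, h1, Finset.sum_const, nsmul_eq_mul, sq]
  have hBle : ‖B‖ ≤ M * ‖a ^ 2‖ := by
    rw [hBsplit]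
    refine le_trans (Padic.nonarchimedean _ _) (max_le ?_ ?_)
    · rw [norm_mul]
      exact mul_le_mul_of_nonneg_right (le_max_left _ _) (norm_nonneg _)
    · refine IsUltrametricDist.norm_sum_le_of_forall_le_of_nonneg
        (mul_nonneg hM0 ha2.le) ?_
      intro j _
      refine IsUltrametricDist.norm_sum_le_of_forall_le_of_nonneg
        (mul_nonneg hM0 ha2.le) ?_
      intro k hk
      exact hterm j k (Finset.mem_erase.mp hk).1.symm
  have final : ‖(n : ℚ_[p])‖ ^ 2 * ‖a‖ ^ 2 ≤ (‖(d : ℚ_[p])‖ * M) * ‖a‖ ^ 2 := by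
    have l1 : ‖(n : ℚ_[p])‖ ^ 2 * ‖a‖ ^ 2 = ‖(n : ℚ_[p]) * a‖ ^ 2 := by
      rw [norm_mul, mul_pow]
    have l2 : ‖a ^ 2‖ = ‖a‖ ^ 2 := norm_pow a 2
    calc ‖(n : ℚ_[p])‖ ^ 2 * ‖a‖ ^ 2 = ‖(n : ℚ_[p]) * a‖ ^ 2 := l1
      _ ≤ ‖(d : ℚ_[p])‖ * ‖B‖ := key
      _ ≤ ‖(d : ℚ_[p])‖ * (M * ‖a ^ 2‖) :=
          mul_le_mul_of_nonneg_left hBle (norm_nonneg _)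
      _ = (‖(d : ℚ_[p])‖ * M) * ‖a‖ ^ 2 := by rw [l2]; ring
  have hapos : (0:ℝ) < ‖a‖ ^ 2 := pow_pos (norm_pos_iff.mpr ha) 2
  exact le_of_mul_le_mul_right final hapos

end
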